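/- arXiv:math/0702399 — 5 statements merged into one kernel-verified Lean document; each statement's English description precedes it below -/
import Mathlib

section
/- Let G, H be groupoids and M a biprincipal G-H bibundle (i.e., both moment maps are surjective, both actions are free, the right H-action is transitive on left fibers, and the left G-action is transitive on right fibers). Then there is a groupoid (the linking groupoid) with object set G₀ ⊔ H₀ and arrow set G₁ ⊔ M ⊔ M^op ⊔ H₁, where compositions are given by groupoid multiplication in G and H, the actions of G and H on M and M^op, and the G-valued and H-valued bibundle pairings; the inverse of m ∈ M is the corresponding element of M^op. -/
/-- A set-theoretic groupoid. `comp g h` is defined when `src g = tgt h`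
(i.e. `g` after `h`). -/
structure SGroupoid where
  Obj : Type
  Arr : Type
  src : Arr → Obj
  tgt : Arr → Obj
  id : Obj → Arr
  comp : Arr → Arr → Arr
  inv : Arr → Arr
  src_id : ∀ x, src (id x) = x
  tgt_id : ∀ x, tgt (id x) = x
  src_comp : ∀ g h, src g = tgt h → src (comp g h) = src h
  tgt_comp : ∀ g h, src g = tgt h → tgt (comp g h) = tgt g
  comp_assoc : ∀ g h k, src g = tgt h → src h = tgt k →
    comp (comp g h) k = comp g (comp h k)
  id_comp : ∀ g, comp (id (tgt g)) g = g
  comp_id : ∀ g, comp g (id (src g)) = g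
  src_inv : ∀ g, src (inv g) = tgt g
  tgt_inv : ∀ g, tgt (inv g) = src g
  comp_inv : ∀ g, comp g (inv g) = id (tgt g)
  inv_comp : ∀ g, comp (inv g) g = id (src g)

/-- A set-theoretic `G`-`H` bibundle: a set `M` with moment maps
`l : M → G.Obj`, `r : M → H.Obj`, a left `G`-action `actL g m` (defined when
`G.src g = l m`) and a right `H`-action `actR m h` (defined when
`r m = H.tgt h`) which commute. -/
structure Bibundle (G H : SGroupoid) where
  M : Type
  l : M → G.Obj
  r : M → H.Obj
  actL : G.Arr → M → M
  actR : M → H.Arr → M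
  l_actL : ∀ g m, G.src g = l m → l (actL g m) = G.tgt g
  r_actL : ∀ g m, G.src g = l m → r (actL g m) = r m
  l_actR : ∀ m h, r m = H.tgt h → l (actR m h) = l m
  r_actR : ∀ m h, r m = H.tgt h → r (actR m h) = H.src h
  actL_comp : ∀ g g' m, G.src g = G.tgt g' → G.src g' = l m →
    actL (G.comp g g') m = actL g (actL g' m)
  actL_id : ∀ m, actL (G.id (l m)) m = m
  actR_comp : ∀ m h h', r m = H.tgt h → H.src h = H.tgt h' →
    actR m (H.comp h h') = actR (actR m h) h'
  actR_id : ∀ m, actR m (H.id (r m)) = m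
  actLR : ∀ g m h, G.src g = l m → r m = H.tgt h →
    actR (actL g m) h = actL g (actR m h)

namespace SGroupoid

theorem inv_id' (K : SGroupoid) (x : K.Obj) : K.inv (K.id x) = K.id x := by
  have h := K.comp_inv (K.id x)
  rw [K.tgt_id] at h
  have h2 := K.id_comp (K.inv (K.id x))
  rw [K.tgt_inv, K.src_id] at h2
  rw [← h2, h]

theorem inv_unique (K : SGroupoid) (g k : K.Arr) (h1 : K.src k = K.tgt g)
    (h2 : K.comp k g = K.id (K.src g)) : k = K.inv g := by
  have e1 : K.comp (K.comp k g) (K.inv g) = K.comp k (K.comp g (K.inv g)) :=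
    K.comp_assoc k g (K.inv g) h1 (K.tgt_inv g).symm
  rw [h2, K.comp_inv, ← K.tgt_inv g, K.id_comp, ← h1, K.comp_id] at e1
  exact e1.symm

theorem inv_comp_eq (K : SGroupoid) (g h : K.Arr) (hgh : K.src g = K.tgt h) :
    K.inv (K.comp g h) = K.comp (K.inv h) (K.inv g) := by
  refine (K.inv_unique (K.comp g h) (K.comp (K.inv h) (K.inv g)) ?_ ?_).symm
  · rw [K.src_comp _ _ ((K.src_inv h).trans ((K.tgt_inv g).trans hgh).symm),
      K.src_inv, K.tgt_comp g h hgh]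
  · have e1 := K.comp_assoc (K.comp (K.inv h) (K.inv g)) g h
      (by rw [K.src_comp _ _ ((K.src_inv h).trans ((K.tgt_inv g).trans hgh).symm), K.src_inv]) hgh
    have e2 := K.comp_assoc (K.inv h) (K.inv g) g
      ((K.src_inv h).trans ((K.tgt_inv g).trans hgh).symm) (K.src_inv g)
    rw [K.src_comp g h hgh]
    rw [← e1, e2, K.inv_comp, hgh, ← K.src_inv h, K.comp_id, K.inv_comp]

end SGroupoid

namespace Bibundle

variable {G H : SGroupoid} (B : Bibundle G H)

theorem actL_inv_actL (g : G.Arr) (m : B.M) (hm : G.src g = B.l m) :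
    B.actL (G.inv g) (B.actL g m) = m := by
  have e := B.actL_comp (G.inv g) g m (G.src_inv g) hm
  rw [G.inv_comp, hm, B.actL_id] at e
  exact e.symm

theorem actL_actL_inv (g : G.Arr) (m : B.M) (hm : G.tgt g = B.l m) :
    B.actL g (B.actL (G.inv g) m) = m := by
  have e := B.actL_comp g (G.inv g) m (G.tgt_inv g).symm ((G.src_inv g).trans hm)
  rw [G.comp_inv, hm, B.actL_id] at e
  exact e.symm

theorem actR_actR_inv (m : B.M) (h : H.Arr) (hm : B.r m = H.tgt h) :
    B.actR (B.actR m h) (H.inv h) = m := by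
  have e := B.actR_comp m h (H.inv h) hm (H.tgt_inv h).symm
  rw [H.comp_inv, ← hm, B.actR_id] at e
  exact e.symm

theorem actR_inv_actR (m : B.M) (h : H.Arr) (hm : B.r m = H.src h) :
    B.actR (B.actR m (H.inv h)) h = m := by
  have e := B.actR_comp m (H.inv h) h (hm.trans (H.tgt_inv h).symm) (H.src_inv h)
  rw [H.inv_comp, ← hm, B.actR_id] at e
  exact e.symm

/-- Uniqueness of the `G`-valued pairing. -/
theorem pG_unique
    (freeL : ∀ g m, G.src g = B.l m → B.actL g m = m → g = G.id (B.l m))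
    (pG : B.M → B.M → G.Arr)
    (hpG : ∀ m m', B.r m = B.r m' →
      G.src (pG m m') = B.l m' ∧ B.actL (pG m m') m' = m)
    (m m' : B.M) (hr : B.r m = B.r m') (g : G.Arr)
    (hs : G.src g = B.l m') (ha : B.actL g m' = m) : g = pG m m' := by
  obtain ⟨h1, h2⟩ := hpG m m' hr
  have htg0 : G.tgt (pG m m') = B.l m := by
    have e := B.l_actL (pG m m') m' h1; rw [h2] at e; exact e.symm
  have htg : G.tgt g = B.l m := by
    have e := B.l_actL g m' hs; rw [ha] at e; exact e.symm
  have hcd : G.src (G.inv (pG m m')) = G.tgt g := by rw [G.src_inv, htg0, htg]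
  have e := B.actL_comp (G.inv (pG m m')) g m' hcd hs
  have e2 : B.actL (G.comp (G.inv (pG m m')) g) m' = m' := by
    rw [e, ha]
    nth_rewrite 2 [← h2]
    exact B.actL_inv_actL _ _ h1
  have hsrc : G.src (G.comp (G.inv (pG m m')) g) = B.l m' := by
    rw [G.src_comp _ _ hcd, hs]
  have key := freeL _ _ hsrc e2
  -- key : comp (inv g0) g = id (l m')
  have e3 := G.comp_assoc (pG m m') (G.inv (pG m m')) g (G.tgt_inv _).symm hcd
  rw [key, ← h1, G.comp_id, G.comp_inv, htg0, ← htg, G.id_comp] at e3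
  exact e3

/-- Uniqueness of the `H`-valued pairing. -/
theorem pH_unique
    (freeR : ∀ m h, B.r m = H.tgt h → B.actR m h = m → h = H.id (B.r m))
    (pH : B.M → B.M → H.Arr)
    (hpH : ∀ m m', B.l m = B.l m' →
      B.r m = H.tgt (pH m m') ∧ B.actR m (pH m m') = m')
    (m m' : B.M) (hl : B.l m = B.l m') (h : H.Arr)
    (ht : B.r m = H.tgt h) (ha : B.actR m h = m') : h = pH m m' := by
  obtain ⟨h1, h2⟩ := hpH m m' hl
  have hsg0 : H.src (pH m m') = B.r m' := by
    have e := B.r_actR m (pH m m') h1; rw [h2] at e; exact e.symm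
  have hsg : H.src h = B.r m' := by
    have e := B.r_actR m h ht; rw [ha] at e; exact e.symm
  have hcd : H.src h = H.tgt (H.inv (pH m m')) := by rw [H.tgt_inv, hsg0, hsg]
  have e := B.actR_comp m h (H.inv (pH m m')) ht hcd
  have e2 : B.actR m (H.comp h (H.inv (pH m m'))) = m := by
    rw [e, ha]
    nth_rewrite 1 [← h2]
    exact B.actR_actR_inv _ _ h1
  have htc : B.r m = H.tgt (H.comp h (H.inv (pH m m'))) := by
    rw [H.tgt_comp _ _ hcd, ht]
  have key := freeR _ _ htc e2
  -- key : comp h (inv g0) = id (r m)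
  have e3 := H.comp_assoc h (H.inv (pH m m')) (pH m m') hcd (H.src_inv _)
  rw [key, h1, H.id_comp, H.inv_comp, hsg0, ← hsg, H.comp_id] at e3
  exact e3.symm

theorem pG_tgt (pG : B.M → B.M → G.Arr)
    (hpG : ∀ m m', B.r m = B.r m' →
      G.src (pG m m') = B.l m' ∧ B.actL (pG m m') m' = m)
    (m m' : B.M) (hr : B.r m = B.r m') : G.tgt (pG m m') = B.l m := by
  have e := B.l_actL (pG m m') m' (hpG m m' hr).1
  rw [(hpG m m' hr).2] at e; exact e.symm

theorem pH_src (pH : B.M → B.M → H.Arr)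
    (hpH : ∀ m m', B.l m = B.l m' →
      B.r m = H.tgt (pH m m') ∧ B.actR m (pH m m') = m')
    (m m' : B.M) (hl : B.l m = B.l m') : H.src (pH m m') = B.r m' := by
  have e := B.r_actR m (pH m m') (hpH m m' hl).1
  rw [(hpH m m' hl).2] at e; exact e.symm

end Bibundle

section Linking

variable (G H : SGroupoid) (B : Bibundle G H)

/-- Composition of the linking groupoid. -/
def lcomp (pG : B.M → B.M → G.Arr) (pH : B.M → B.M → H.Arr) :
    (G.Arr ⊕ B.M ⊕ B.M ⊕ H.Arr) → (G.Arr ⊕ B.M ⊕ B.M ⊕ H.Arr) →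
    (G.Arr ⊕ B.M ⊕ B.M ⊕ H.Arr)
  | .inl g, .inl g' => .inl (G.comp g g')
  | .inl g, .inr (.inl m) => .inr (.inl (B.actL g m))
  | .inr (.inl m), .inr (.inr (.inl m')) => .inl (pG m m')
  | .inr (.inl m), .inr (.inr (.inr h)) => .inr (.inl (B.actR m h))
  | .inr (.inr (.inl m)), .inl g => .inr (.inr (.inl (B.actL (G.inv g) m)))
  | .inr (.inr (.inl m)), .inr (.inl m') => .inr (.inr (.inr (pH m m')))
  | .inr (.inr (.inr h)), .inr (.inr (.inl m)) => .inr (.inr (.inl (B.actR m (H.inv h))))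
  | .inr (.inr (.inr h)), .inr (.inr (.inr h')) => .inr (.inr (.inr (H.comp h h')))
  | a, _ => a

/-- Inversion of the linking groupoid. -/
def linv : (G.Arr ⊕ B.M ⊕ B.M ⊕ H.Arr) → (G.Arr ⊕ B.M ⊕ B.M ⊕ H.Arr)
  | .inl g => .inl (G.inv g)
  | .inr (.inl m) => .inr (.inr (.inl m))
  | .inr (.inr (.inl m)) => .inr (.inl m)
  | .inr (.inr (.inr h)) => .inr (.inr (.inr (H.inv h)))

variable {G H B} (pG : B.M → B.M → G.Arr) (pH : B.M → B.M → H.Arr)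

@[simp] theorem lcomp_GG (g g') : lcomp G H B pG pH (.inl g) (.inl g') = .inl (G.comp g g') := rfl
@[simp] theorem lcomp_GM (g m) : lcomp G H B pG pH (.inl g) (.inr (.inl m)) = .inr (.inl (B.actL g m)) := rfl
@[simp] theorem lcomp_MOp (m m') : lcomp G H B pG pH (.inr (.inl m)) (.inr (.inr (.inl m'))) = .inl (pG m m') := rfl
@[simp] theorem lcomp_MH (m h) : lcomp G H B pG pH (.inr (.inl m)) (.inr (.inr (.inr h))) = .inr (.inl (B.actR m h)) := rfl
@[simp] theorem lcomp_OpG (m g) : lcomp G H B pG pH (.inr (.inr (.inl m))) (.inl g) = .inr (.inr (.inl (B.actL (G.inv g) m))) := rfl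
@[simp] theorem lcomp_OpM (m m') : lcomp G H B pG pH (.inr (.inr (.inl m))) (.inr (.inl m')) = .inr (.inr (.inr (pH m m'))) := rfl
@[simp] theorem lcomp_HOp (h m) : lcomp G H B pG pH (.inr (.inr (.inr h))) (.inr (.inr (.inl m))) = .inr (.inr (.inl (B.actR m (H.inv h)))) := rfl
@[simp] theorem lcomp_HH (h h') : lcomp G H B pG pH (.inr (.inr (.inr h))) (.inr (.inr (.inr h'))) = .inr (.inr (.inr (H.comp h h'))) := rfl
@[simp] theorem linv_G (g) : linv G H B (.inl g) = .inl (G.inv g) := rfl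
@[simp] theorem linv_M (m) : linv G H B (.inr (.inl m)) = .inr (.inr (.inl m)) := rfl
@[simp] theorem linv_Op (m) : linv G H B (.inr (.inr (.inl m))) = .inr (.inl m) := rfl
@[simp] theorem linv_H (h) : linv G H B (.inr (.inr (.inr h))) = .inr (.inr (.inr (H.inv h))) := rfl

end Linking

/-- The linking groupoid of a biprincipal bibundle: on objects `G₀ ⊔ H₀` and
arrows `G₁ ⊔ M ⊔ M^op ⊔ H₁` (with `m ∈ M` an arrow from `l m` to `r m` and its
`M^op`-copy the arrow in the opposite direction), there is a groupoid
structure whose composition is given by the multiplications of `G` and `H`,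
the actions on `M` and `M^op`, and the `G`- and `H`-valued pairings, and in
which the inverse of `m ∈ M` is its copy in `M^op`. -/
theorem stmt5 (G H : SGroupoid) (B : Bibundle G H)
    (lsurj : Function.Surjective B.l) (rsurj : Function.Surjective B.r)
    (freeR : ∀ m h, B.r m = H.tgt h → B.actR m h = m → h = H.id (B.r m))
    (freeL : ∀ g m, G.src g = B.l m → B.actL g m = m → g = G.id (B.l m))
    (transR : ∀ m m', B.l m = B.l m' → ∃ h, B.r m = H.tgt h ∧ B.actR m h = m')
    (transL : ∀ m m', B.r m = B.r m' → ∃ g, G.src g = B.l m' ∧ B.actL g m' = m)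
    -- the `G`-valued pairing: the unique `g` with `g · m' = m`
    (pG : B.M → B.M → G.Arr)
    (hpG : ∀ m m', B.r m = B.r m' →
      G.src (pG m m') = B.l m' ∧ B.actL (pG m m') m' = m)
    -- the `H`-valued pairing: the unique `h` with `m · h = m'`
    (pH : B.M → B.M → H.Arr)
    (hpH : ∀ m m', B.l m = B.l m' →
      B.r m = H.tgt (pH m m') ∧ B.actR m (pH m m') = m')
    -- source, target and identities of the linking groupoid
    (lsrc ltgt : (G.Arr ⊕ B.M ⊕ B.M ⊕ H.Arr) → (G.Obj ⊕ H.Obj))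
    (lid : (G.Obj ⊕ H.Obj) → (G.Arr ⊕ B.M ⊕ B.M ⊕ H.Arr))
    (hsrcG : ∀ g, lsrc (.inl g) = .inl (G.src g))
    (htgtG : ∀ g, ltgt (.inl g) = .inl (G.tgt g))
    (hsrcM : ∀ m, lsrc (.inr (.inl m)) = .inr (B.r m))
    (htgtM : ∀ m, ltgt (.inr (.inl m)) = .inl (B.l m))
    (hsrcOp : ∀ m, lsrc (.inr (.inr (.inl m))) = .inl (B.l m))
    (htgtOp : ∀ m, ltgt (.inr (.inr (.inl m))) = .inr (B.r m))
    (hsrcH : ∀ h, lsrc (.inr (.inr (.inr h))) = .inr (H.src h))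
    (htgtH : ∀ h, ltgt (.inr (.inr (.inr h))) = .inr (H.tgt h))
    (hidG : ∀ x, lid (.inl x) = .inl (G.id x))
    (hidH : ∀ y, lid (.inr y) = .inr (.inr (.inr (H.id y)))) :
    ∃ comp : (G.Arr ⊕ B.M ⊕ B.M ⊕ H.Arr) → (G.Arr ⊕ B.M ⊕ B.M ⊕ H.Arr) →
        (G.Arr ⊕ B.M ⊕ B.M ⊕ H.Arr),
    ∃ inv : (G.Arr ⊕ B.M ⊕ B.M ⊕ H.Arr) → (G.Arr ⊕ B.M ⊕ B.M ⊕ H.Arr),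
      -- groupoid axioms
      (∀ a b, lsrc a = ltgt b → lsrc (comp a b) = lsrc b) ∧
      (∀ a b, lsrc a = ltgt b → ltgt (comp a b) = ltgt a) ∧
      (∀ a b c, lsrc a = ltgt b → lsrc b = ltgt c →
        comp (comp a b) c = comp a (comp b c)) ∧
      (∀ a, comp (lid (ltgt a)) a = a) ∧
      (∀ a, comp a (lid (lsrc a)) = a) ∧
      (∀ a, lsrc (inv a) = ltgt a) ∧
      (∀ a, ltgt (inv a) = lsrc a) ∧
      (∀ a, comp a (inv a) = lid (ltgt a)) ∧
      (∀ a, comp (inv a) a = lid (lsrc a)) ∧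
      -- the composition extends `G` and `H`, the actions, and the pairings
      (∀ g g', G.src g = G.tgt g' →
        comp (.inl g) (.inl g') = .inl (G.comp g g')) ∧
      (∀ g m, G.src g = B.l m →
        comp (.inl g) (.inr (.inl m)) = .inr (.inl (B.actL g m))) ∧
      (∀ m h, B.r m = H.tgt h →
        comp (.inr (.inl m)) (.inr (.inr (.inr h))) = .inr (.inl (B.actR m h))) ∧
      (∀ m m', B.r m = B.r m' →
        comp (.inr (.inl m)) (.inr (.inr (.inl m'))) = .inl (pG m m')) ∧
      (∀ m m', B.l m = B.l m' →
        comp (.inr (.inr (.inl m))) (.inr (.inl m')) = .inr (.inr (.inr (pH m m')))) ∧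
      (∀ m g, B.l m = G.tgt g →
        comp (.inr (.inr (.inl m))) (.inl g) = .inr (.inr (.inl (B.actL (G.inv g) m)))) ∧
      (∀ h m, H.src h = B.r m →
        comp (.inr (.inr (.inr h))) (.inr (.inr (.inl m))) = .inr (.inr (.inl (B.actR m (H.inv h))))) ∧
      (∀ h h', H.src h = H.tgt h' →
        comp (.inr (.inr (.inr h))) (.inr (.inr (.inr h'))) = .inr (.inr (.inr (H.comp h h')))) ∧
      -- the inverse
      (∀ g, inv (.inl g) = .inl (G.inv g)) ∧
      (∀ m, inv (.inr (.inl m)) = .inr (.inr (.inl m))) ∧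
      (∀ m, inv (.inr (.inr (.inl m))) = .inr (.inl m)) ∧
      (∀ h, inv (.inr (.inr (.inr h))) = .inr (.inr (.inr (H.inv h)))) := by
  refine ⟨lcomp G H B pG pH, linv G H B, ?_, ?_, ?_, ?_, ?_, ?_, ?_, ?_, ?_,
    fun _ _ _ => rfl, fun _ _ _ => rfl, fun _ _ _ => rfl, fun _ _ _ => rfl,
    fun _ _ _ => rfl, fun _ _ _ => rfl, fun _ _ _ => rfl, fun _ _ _ => rfl,
    fun _ => rfl, fun _ => rfl, fun _ => rfl, fun _ => rfl⟩
  -- src of composition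
  · intro a b hab
    rcases a with g | m | m | h <;> rcases b with g' | m' | m' | h' <;>
      simp only [hsrcG, htgtG, hsrcM, htgtM, hsrcOp, htgtOp, hsrcH, htgtH,
        Sum.inl.injEq, Sum.inr.injEq, reduceCtorEq] at hab
    · simp only [lcomp_GG, hsrcG, Sum.inl.injEq]
      exact G.src_comp _ _ hab
    · simp only [lcomp_GM, hsrcM, Sum.inr.injEq]
      exact B.r_actL _ _ hab
    · simp only [lcomp_MOp, hsrcG, hsrcOp, Sum.inl.injEq]
      exact (hpG m m' hab).1
    · simp only [lcomp_MH, hsrcM, hsrcH, Sum.inr.injEq]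
      exact B.r_actR _ _ hab
    · simp only [lcomp_OpG, hsrcOp, hsrcG, Sum.inl.injEq]
      rw [B.l_actL _ _ ((G.src_inv g').trans hab.symm), G.tgt_inv]
    · simp only [lcomp_OpM, hsrcH, hsrcM, Sum.inr.injEq]
      exact B.pH_src pH hpH m m' hab
    · simp only [lcomp_HOp, hsrcOp, Sum.inl.injEq]
      exact B.l_actR _ _ (hab.symm.trans (H.tgt_inv h).symm)
    · simp only [lcomp_HH, hsrcH, Sum.inr.injEq]
      exact H.src_comp _ _ hab
  -- tgt of composition
  · intro a b hab
    rcases a with g | m | m | h <;> rcases b with g' | m' | m' | h' <;>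
      simp only [hsrcG, htgtG, hsrcM, htgtM, hsrcOp, htgtOp, hsrcH, htgtH,
        Sum.inl.injEq, Sum.inr.injEq, reduceCtorEq] at hab
    · simp only [lcomp_GG, htgtG, Sum.inl.injEq]
      exact G.tgt_comp _ _ hab
    · simp only [lcomp_GM, htgtM, htgtG, Sum.inl.injEq]
      exact B.l_actL _ _ hab
    · simp only [lcomp_MOp, htgtG, htgtM, Sum.inl.injEq]
      exact B.pG_tgt pG hpG m m' hab
    · simp only [lcomp_MH, htgtM, Sum.inl.injEq]
      exact B.l_actR _ _ hab
    · simp only [lcomp_OpG, htgtOp, Sum.inr.injEq]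
      exact B.r_actL _ _ ((G.src_inv g').trans hab.symm)
    · simp only [lcomp_OpM, htgtH, htgtOp, Sum.inr.injEq]
      exact (hpH m m' hab).1.symm
    · simp only [lcomp_HOp, htgtOp, htgtH, Sum.inr.injEq]
      rw [B.r_actR _ _ (hab.symm.trans (H.tgt_inv h).symm), H.src_inv]
    · simp only [lcomp_HH, htgtH, Sum.inr.injEq]
      exact H.tgt_comp _ _ hab
  -- associativity
  · intro a b c hab hbc
    rcases a with g | m | m | h <;> rcases b with g' | m' | m' | h' <;>
      rcases c with g'' | m'' | m'' | h'' <;>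
      simp only [hsrcG, htgtG, hsrcM, htgtM, hsrcOp, htgtOp, hsrcH, htgtH,
        Sum.inl.injEq, Sum.inr.injEq, reduceCtorEq] at hab hbc
    -- (G,G,G)
    · simp only [lcomp_GG, Sum.inl.injEq]
      exact G.comp_assoc _ _ _ hab hbc
    -- (G,G,M)
    · simp only [lcomp_GG, lcomp_GM, Sum.inr.injEq, Sum.inl.injEq]
      exact B.actL_comp _ _ _ hab hbc
    -- (G,M,Mop)
    · have htg := B.pG_tgt pG hpG m' m'' hbc
      have h1 := (hpG m' m'' hbc).1
      have h2 := (hpG m' m'' hbc).2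
      have hc1 : G.src g = G.tgt (pG m' m'') := hab.trans htg.symm
      have ha : B.actL (G.comp g (pG m' m'')) m'' = B.actL g m' := by
        rw [B.actL_comp _ _ _ hc1 h1, h2]
      have hs : G.src (G.comp g (pG m' m'')) = B.l m'' := by
        rw [G.src_comp _ _ hc1, h1]
      simp only [lcomp_GM, lcomp_MOp, lcomp_GG, Sum.inl.injEq]
      exact (B.pG_unique freeL pG hpG _ m'' ((B.r_actL g m' hab).trans hbc) _ hs ha).symm
    -- (G,M,H)
    · simp only [lcomp_GM, lcomp_MH, Sum.inr.injEq, Sum.inl.injEq]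
      exact B.actLR _ _ _ hab hbc
    -- (M,Mop,G)
    · have sinv : G.src (G.inv g'') = B.l m' := (G.src_inv g'').trans hbc.symm
      have hX : G.src g'' = B.l (B.actL (G.inv g'') m') :=
        ((B.l_actL _ _ sinv).trans (G.tgt_inv g'')).symm
      have hr' : B.r m = B.r (B.actL (G.inv g'') m') :=
        hab.trans (B.r_actL _ _ sinv).symm
      have hc1 : G.src (pG m m') = G.tgt g'' := (hpG m m' hab).1.trans hbc
      have hs : G.src (G.comp (pG m m') g'') = B.l (B.actL (G.inv g'') m') := by
        rw [G.src_comp _ _ hc1]; exact hX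
      have ha : B.actL (G.comp (pG m m') g'') (B.actL (G.inv g'') m') = m := by
        rw [B.actL_comp _ _ _ hc1 hX, B.actL_actL_inv _ _ hbc.symm, (hpG m m' hab).2]
      simp only [lcomp_MOp, lcomp_OpG, lcomp_GG, Sum.inl.injEq]
      exact B.pG_unique freeL pG hpG m _ hr' _ hs ha
    -- (M,Mop,M)
    · have hg1 := (hpG m m' hab).1
      have hg2 := (hpG m m' hab).2
      have hh1 := (hpH m' m'' hbc).1
      have hh2 := (hpH m' m'' hbc).2
      simp only [lcomp_MOp, lcomp_GM, lcomp_OpM, lcomp_MH, Sum.inr.injEq, Sum.inl.injEq]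
      calc B.actL (pG m m') m''
          = B.actL (pG m m') (B.actR m' (pH m' m'')) := by rw [hh2]
        _ = B.actR (B.actL (pG m m') m') (pH m' m'') := (B.actLR _ _ _ hg1 hh1).symm
        _ = B.actR m (pH m' m'') := by rw [hg2]
    -- (M,H,Mop)
    · have hr0 : B.r (B.actR m h') = B.r m'' := (B.r_actR m h' hab).trans hbc
      have hg1 := (hpG _ m'' hr0).1
      have hg2 := (hpG _ m'' hr0).2
      have htinv : B.r m'' = H.tgt (H.inv h') := hbc.symm.trans (H.tgt_inv h').symm
      have hrX : B.r m = B.r (B.actR m'' (H.inv h')) :=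
        hab.trans ((B.r_actR _ _ htinv).trans (H.src_inv h')).symm
      have hsX : G.src (pG (B.actR m h') m'') = B.l (B.actR m'' (H.inv h')) :=
        hg1.trans (B.l_actR _ _ htinv).symm
      have haX : B.actL (pG (B.actR m h') m'') (B.actR m'' (H.inv h')) = m := by
        rw [← B.actLR _ _ _ hg1 htinv, hg2]
        exact B.actR_actR_inv m h' hab
      simp only [lcomp_MH, lcomp_MOp, lcomp_HOp, Sum.inl.injEq]
      exact B.pG_unique freeL pG hpG m _ hrX _ hsX haX
    -- (M,H,H)
    · simp only [lcomp_MH, lcomp_HH, Sum.inr.injEq, Sum.inl.injEq]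
      exact (B.actR_comp m h' h'' hab hbc).symm
    -- (Mop,G,G)
    · have c1 : G.src (G.inv g'') = G.tgt (G.inv g') :=
        (G.src_inv g'').trans ((G.tgt_inv g').trans hbc).symm
      have c2 : G.src (G.inv g') = B.l m := (G.src_inv g').trans hab.symm
      simp only [lcomp_OpG, lcomp_GG, Sum.inr.injEq, Sum.inl.injEq]
      rw [G.inv_comp_eq g' g'' hbc, B.actL_comp _ _ _ c1 c2]
    -- (Mop,G,M)
    · have sinv : G.src (G.inv g') = B.l m := (G.src_inv g').trans hab.symm
      have hl0 : B.l (B.actL (G.inv g') m) = B.l m'' :=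
        (B.l_actL _ _ sinv).trans ((G.tgt_inv g').trans hbc)
      have hh1 := (hpH _ m'' hl0).1
      have hh2 := (hpH _ m'' hl0).2
      have ht : B.r m = H.tgt (pH (B.actL (G.inv g') m) m'') :=
        (B.r_actL _ _ sinv).symm.trans hh1
      have hlX : B.l m = B.l (B.actL g' m'') := hab.trans (B.l_actL g' m'' hbc).symm
      have haX : B.actR m (pH (B.actL (G.inv g') m) m'') = B.actL g' m'' := by
        have e := hh2
        rw [B.actLR _ _ _ sinv ht] at e
        have e2 := B.actL_actL_inv (g := g') (m := B.actR m (pH (B.actL (G.inv g') m) m''))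
          (hab.symm.trans (B.l_actR m _ ht).symm)
        rw [e] at e2
        exact e2.symm
      simp only [lcomp_OpG, lcomp_OpM, lcomp_GM, Sum.inr.injEq]
      exact B.pH_unique freeR pH hpH m _ hlX _ ht haX
    -- (Mop,M,Mop)
    · have hh1 := (hpH m m' hab).1
      have hh2 := (hpH m m' hab).2
      have hg1 := (hpG m' m'' hbc).1
      have hg2 := (hpG m' m'' hbc).2
      have hs0 : H.src (pH m m') = B.r m' := B.pH_src pH hpH m m' hab
      have htinv : B.r m'' = H.tgt (H.inv (pH m m')) :=
        (hbc.symm.trans hs0.symm).trans (H.tgt_inv _).symm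
      have step1 : B.actL (pG m' m'') (B.actR m'' (H.inv (pH m m'))) = m := by
        rw [← B.actLR _ _ _ hg1 htinv, hg2]
        have e := B.actR_actR_inv m (pH m m') hh1
        rw [hh2] at e
        exact e
      have e := B.actL_inv_actL (pG m' m'') (B.actR m'' (H.inv (pH m m')))
        (hg1.trans (B.l_actR m'' _ htinv).symm)
      rw [step1] at e
      simp only [lcomp_OpM, lcomp_HOp, lcomp_MOp, lcomp_OpG, Sum.inr.injEq, Sum.inl.injEq]
      exact e.symm
    -- (Mop,M,H)
    · have hh1 := (hpH m m' hab).1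
      have hh2 := (hpH m m' hab).2
      have hs0 : H.src (pH m m') = B.r m' := B.pH_src pH hpH m m' hab
      have hc : H.src (pH m m') = H.tgt h'' := hs0.trans hbc
      have hl : B.l m = B.l (B.actR m' h'') := hab.trans (B.l_actR m' h'' hbc).symm
      have ht : B.r m = H.tgt (H.comp (pH m m') h'') :=
        hh1.trans (H.tgt_comp _ _ hc).symm
      have ha : B.actR m (H.comp (pH m m') h'') = B.actR m' h'' := by
        rw [B.actR_comp m _ h'' hh1 hc, hh2]
      simp only [lcomp_OpM, lcomp_HH, lcomp_MH, Sum.inr.injEq]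
      exact B.pH_unique freeR pH hpH m _ hl _ ht ha
    -- (H,Mop,G)
    · have c1 : G.src (G.inv g'') = B.l m' := (G.src_inv g'').trans hbc.symm
      have c2 : B.r m' = H.tgt (H.inv h) := hab.symm.trans (H.tgt_inv h).symm
      simp only [lcomp_HOp, lcomp_OpG, Sum.inr.injEq, Sum.inl.injEq]
      exact (B.actLR _ _ _ c1 c2).symm
    -- (H,Mop,M)
    · have htinv : B.r m' = H.tgt (H.inv h) := hab.symm.trans (H.tgt_inv h).symm
      have hlX : B.l (B.actR m' (H.inv h)) = B.l m'' := (B.l_actR _ _ htinv).trans hbc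
      have hh1 := (hpH m' m'' hbc).1
      have hh2 := (hpH m' m'' hbc).2
      have hch : H.src h = H.tgt (pH m' m'') := hab.trans hh1
      have crX : B.r (B.actR m' (H.inv h)) = H.tgt h :=
        (B.r_actR _ _ htinv).trans (H.src_inv h)
      have htX : B.r (B.actR m' (H.inv h)) = H.tgt (H.comp h (pH m' m'')) :=
        crX.trans (H.tgt_comp _ _ hch).symm
      have haX : B.actR (B.actR m' (H.inv h)) (H.comp h (pH m' m'')) = m'' := by
        rw [B.actR_comp _ h _ crX hch]
        have e := B.actR_inv_actR m' h hab.symm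
        rw [e, hh2]
      simp only [lcomp_HOp, lcomp_OpM, lcomp_HH, Sum.inr.injEq]
      exact (B.pH_unique freeR pH hpH _ m'' hlX _ htX haX).symm
    -- (H,H,Mop)
    · have c1 : B.r m'' = H.tgt (H.inv h') := hbc.symm.trans (H.tgt_inv h').symm
      have c2 : H.src (H.inv h') = H.tgt (H.inv h) :=
        (H.src_inv h').trans (hab.symm.trans (H.tgt_inv h).symm)
      simp only [lcomp_HH, lcomp_HOp, Sum.inr.injEq]
      rw [H.inv_comp_eq h h' hab, B.actR_comp _ _ _ c1 c2]
    -- (H,H,H)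
    · simp only [lcomp_HH, Sum.inr.injEq]
      exact H.comp_assoc _ _ _ hab hbc
  -- left identity
  · intro a
    rcases a with g | m | m | h
    · rw [htgtG, hidG]
      simp only [lcomp_GG]
      rw [G.id_comp]
    · rw [htgtM, hidG]
      simp only [lcomp_GM]
      rw [B.actL_id]
    · rw [htgtOp, hidH]
      simp only [lcomp_HOp]
      rw [H.inv_id', B.actR_id]
    · rw [htgtH, hidH]
      simp only [lcomp_HH]
      rw [H.id_comp]
  -- right identity
  · intro a
    rcases a with g | m | m | h
    · rw [hsrcG, hidG]
      simp only [lcomp_GG]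
      rw [G.comp_id]
    · rw [hsrcM, hidH]
      simp only [lcomp_MH]
      rw [B.actR_id]
    · rw [hsrcOp, hidG]
      simp only [lcomp_OpG]
      rw [G.inv_id', B.actL_id]
    · rw [hsrcH, hidH]
      simp only [lcomp_HH]
      rw [H.comp_id]
  -- src of inverse
  · intro a
    rcases a with g | m | m | h
    · simp only [linv_G, hsrcG, htgtG, G.src_inv]
    · simp only [linv_M, hsrcOp, htgtM]
    · simp only [linv_Op, hsrcM, htgtOp]
    · simp only [linv_H, hsrcH, htgtH, H.src_inv]
  -- tgt of inverse
  · intro a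
    rcases a with g | m | m | h
    · simp only [linv_G, htgtG, hsrcG, G.tgt_inv]
    · simp only [linv_M, htgtOp, hsrcM]
    · simp only [linv_Op, htgtM, hsrcOp]
    · simp only [linv_H, htgtH, hsrcH, H.tgt_inv]
  -- comp with inverse
  · intro a
    rcases a with g | m | m | h
    · simp only [linv_G, lcomp_GG, htgtG, hidG]
      rw [G.comp_inv]
    · simp only [linv_M, lcomp_MOp, htgtM, hidG]
      have e := B.pG_unique freeL pG hpG m m rfl (G.id (B.l m))
        (by rw [G.src_id]) (B.actL_id m)
      rw [← e]
    · simp only [linv_Op, lcomp_OpM, htgtOp, hidH]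
      have e := B.pH_unique freeR pH hpH m m rfl (H.id (B.r m))
        (H.tgt_id _).symm (B.actR_id m)
      rw [← e]
    · simp only [linv_H, lcomp_HH, htgtH, hidH]
      rw [H.comp_inv]
  -- inverse then comp
  · intro a
    rcases a with g | m | m | h
    · simp only [linv_G, lcomp_GG, hsrcG, hidG]
      rw [G.inv_comp]
    · simp only [linv_M, lcomp_OpM, hsrcM, hidH]
      have e := B.pH_unique freeR pH hpH m m rfl (H.id (B.r m))
        (H.tgt_id _).symm (B.actR_id m)
      rw [← e]
    · simp only [linv_Op, lcomp_MOp, hsrcOp, hidG]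
      have e := B.pG_unique freeL pG hpG m m rfl (G.id (B.l m))
        (by rw [G.src_id]) (B.actL_id m)
      rw [← e]
    · simp only [linv_H, lcomp_HH, hsrcH, hidH]
      rw [H.inv_comp]
end

section
/- Let G, H be groupoids, M a right principal G-H bibundle, and σ : G₀ → M a section of the left moment map (l_M ∘ σ = id). Then the map φ : G₁ → H₁ defined by φ(g) = ⟨σ(target(g)), g · σ(source(g))⟩ (using the H-valued bibundle pairing) is a homomorphism of groupoids: φ(g₁g₂) = φ(g₁)φ(g₂) whenever g₁g₂ is defined, and φ(1_x) = 1_{r_M(σ(x))}. -/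
/-- Given a right principal `G`-`H` bibundle `M` with bibundle pairing and a
section `σ` of the left moment map, the map
`φ(g) = ⟨σ(tgt g), g · σ(src g)⟩` is a homomorphism of groupoids:
it is multiplicative and sends `1ₓ` to `1_{r(σ x)}`. -/
theorem stmt10 (G H : SGroupoid) (B : Bibundle G H)
    (free : ∀ m h, B.r m = H.tgt h → B.actR m h = m → h = H.id (B.r m))
    (trans : ∀ m m', B.l m = B.l m' → ∃ h, B.r m = H.tgt h ∧ B.actR m h = m')
    (lsurj : Function.Surjective B.l)
    -- the `H`-valued bibundle pairing: the unique `h` with `m·h = m'`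
    (pair : B.M → B.M → H.Arr)
    (hpair : ∀ m m', B.l m = B.l m' →
      B.r m = H.tgt (pair m m') ∧ B.actR m (pair m m') = m')
    (σ : G.Obj → B.M) (hσ : ∀ x, B.l (σ x) = x) :
    (∀ g1 g2, G.src g1 = G.tgt g2 →
      pair (σ (G.tgt (G.comp g1 g2)))
           (B.actL (G.comp g1 g2) (σ (G.src (G.comp g1 g2)))) =
      H.comp (pair (σ (G.tgt g1)) (B.actL g1 (σ (G.src g1))))
             (pair (σ (G.tgt g2)) (B.actL g2 (σ (G.src g2))))) ∧
    (∀ x, pair (σ (G.tgt (G.id x))) (B.actL (G.id x) (σ (G.src (G.id x)))) =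
      H.id (B.r (σ x))) := by
  -- uniqueness of the pairing, from freeness
  have uniq : ∀ m m' h, B.l m = B.l m' → B.r m = H.tgt h → B.actR m h = m' →
      h = pair m m' := by
    intro m m' h hl hth hact
    obtain ⟨hp1, hp2⟩ := hpair m m' hl
    set p := pair m m' with hp
    have hrm' : B.r m' = H.src p := by
      rw [← hp2]; exact B.r_actR m p hp1
    -- m' · p⁻¹ = m
    have h1 : B.actR m' (H.inv p) = m := by
      rw [← hp2, ← B.actR_comp m p (H.inv p) hp1 (by rw [H.tgt_inv]),
        H.comp_inv, ← hp1, B.actR_id]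
    -- m' · (p⁻¹ h) = m'
    have h2 : B.actR m' (H.comp (H.inv p) h) = m' := by
      rw [B.actR_comp m' (H.inv p) h (by rw [H.tgt_inv, hrm']) (by rw [H.src_inv, ← hp1, hth]),
        h1, hact]
    have h3 := free m' (H.comp (H.inv p) h)
      (by rw [H.tgt_comp _ _ (by rw [H.src_inv, ← hp1, hth]), H.tgt_inv, hrm']) h2
    -- conclude
    have h4 : H.comp p (H.comp (H.inv p) h) = H.comp p (H.id (B.r m')) := by rw [h3]
    rw [← H.comp_assoc p (H.inv p) h (by rw [H.tgt_inv]) (by rw [H.src_inv, ← hp1, hth]),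
      H.comp_inv, ← hp1, hth, H.id_comp, hrm', H.comp_id] at h4
    exact h4
  constructor
  · intro g1 g2 hg
    have hs1 : G.src g1 = B.l (σ (G.src g1)) := (hσ _).symm
    have hs2 : G.src g2 = B.l (σ (G.src g2)) := (hσ _).symm
    have hsc : G.src (G.comp g1 g2) = B.l (σ (G.src (G.comp g1 g2))) := (hσ _).symm
    have hl1 : B.l (σ (G.tgt g1)) = B.l (B.actL g1 (σ (G.src g1))) := by
      rw [hσ, B.l_actL g1 _ hs1]
    have hl2 : B.l (σ (G.tgt g2)) = B.l (B.actL g2 (σ (G.src g2))) := by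
      rw [hσ, B.l_actL g2 _ hs2]
    obtain ⟨hq1, hq2⟩ := hpair _ _ hl1
    obtain ⟨hq3, hq4⟩ := hpair _ _ hl2
    set p1 := pair (σ (G.tgt g1)) (B.actL g1 (σ (G.src g1)))
    set p2 := pair (σ (G.tgt g2)) (B.actL g2 (σ (G.src g2)))
    have hsp1 : H.src p1 = H.tgt p2 := by
      rw [← hq3]
      have := B.r_actR _ p1 hq1
      rw [← this, hq2, B.r_actL g1 _ hs1, hg]
    refine (uniq _ _ (H.comp p1 p2) ?_ ?_ ?_).symm
    · rw [hσ, B.l_actL _ _ hsc]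
    · rw [H.tgt_comp _ _ hsp1, ← hq1, G.tgt_comp _ _ hg]
    · rw [G.tgt_comp _ _ hg, G.src_comp _ _ hg]
      rw [B.actR_comp _ p1 p2 hq1 hsp1, hq2]
      have hlr := B.actLR g1 (σ (G.tgt g2)) p2 (by rw [hσ]; exact hg) hq3
      rw [hg] at hq2 ⊢
      rw [hlr, hq4, ← B.actL_comp g1 g2 _ hg hs2]
  · intro x
    have hid : G.src (G.id x) = x := G.src_id x
    have htid : G.tgt (G.id x) = x := G.tgt_id x
    have hact : B.actL (G.id x) (σ (G.src (G.id x))) = σ x := by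
      rw [hid]
      have : G.id x = G.id (B.l (σ x)) := by rw [hσ]
      rw [this, B.actL_id]
    rw [htid, hact]
    refine (uniq _ _ (H.id (B.r (σ x))) rfl (by rw [H.tgt_id]) (B.actR_id _)).symm
end

section
/- Let G, H be groupoids, M a right principal G-H bibundle, and σ a section of l_M with induced groupoid homomorphism φ(g) = ⟨σ(target(g)), g·σ(source(g))⟩. Then the map ⟨φ⟩ → M, (x,h) ↦ σ(x)·h, is an isomorphism of G-H bibundles, with inverse m ↦ (l_M(m), ⟨σ(l_M(m)), m⟩). In particular, a right principal bibundle is isomorphic to the bundlization of a groupoid homomorphism if and only if its left moment map admits a section. -/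
/-- Given a right principal `G`-`H` bibundle `M` with pairing and a section
`σ` of the left moment map, the map `(x,h) ↦ σ(x)·h` from the bundlization
`⟨φ⟩` (with `φ₀ x = r(σ x)`) to `M` is an isomorphism of `G`-`H` bibundles:
it is a biequivariant bijection preserving both moment maps, with inverse
`m ↦ (l m, ⟨σ(l m), m⟩)`. -/
theorem stmt11 (G H : SGroupoid) (B : Bibundle G H)
    (free : ∀ m h, B.r m = H.tgt h → B.actR m h = m → h = H.id (B.r m))
    (trans : ∀ m m', B.l m = B.l m' → ∃ h, B.r m = H.tgt h ∧ B.actR m h = m')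
    (lsurj : Function.Surjective B.l)
    (pair : B.M → B.M → H.Arr)
    (hpair : ∀ m m', B.l m = B.l m' →
      B.r m = H.tgt (pair m m') ∧ B.actR m (pair m m') = m')
    (σ : G.Obj → B.M) (hσ : ∀ x, B.l (σ x) = x)
    -- the map `⟨φ⟩ → M`, `(x,h) ↦ σ(x)·h`
    (Φ : {p : G.Obj × H.Arr // B.r (σ p.1) = H.tgt p.2} → B.M)
    (hΦ : ∀ p, Φ p = B.actR (σ p.val.1) p.val.2) :
    Function.Bijective Φ ∧
    -- `Φ` preserves the moment maps
    (∀ p, B.l (Φ p) = p.val.1) ∧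
    (∀ p, B.r (Φ p) = H.src p.val.2) ∧
    -- `Φ` is right `H`-equivariant
    (∀ (p q : {p : G.Obj × H.Arr // B.r (σ p.1) = H.tgt p.2}) (h' : H.Arr),
      H.src p.val.2 = H.tgt h' → q.val = (p.val.1, H.comp p.val.2 h') →
      Φ q = B.actR (Φ p) h') ∧
    -- `Φ` is left `G`-equivariant (with `φ(g) = ⟨σ(tgt g), g·σ(src g)⟩`)
    (∀ (g : G.Arr) (p q : {p : G.Obj × H.Arr // B.r (σ p.1) = H.tgt p.2}),
      G.src g = p.val.1 →
      q.val = (G.tgt g,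
        H.comp (pair (σ (G.tgt g)) (B.actL g (σ (G.src g)))) p.val.2) →
      Φ q = B.actL g (Φ p)) ∧
    -- the inverse is `m ↦ (l m, ⟨σ(l m), m⟩)`
    (∀ (m : B.M) (q : {p : G.Obj × H.Arr // B.r (σ p.1) = H.tgt p.2}),
      q.val = (B.l m, pair (σ (B.l m)) m) → Φ q = m) := by
  
  have hl : ∀ p, B.l (Φ p) = p.val.1 := by
    intro p; rw [hΦ, B.l_actR _ _ p.prop, hσ]
  have hr : ∀ p, B.r (Φ p) = H.src p.val.2 := by
    intro p; rw [hΦ, B.r_actR _ _ p.prop]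
  have hinv : ∀ (m : B.M) (q : {p : G.Obj × H.Arr // B.r (σ p.1) = H.tgt p.2}),
      q.val = (B.l m, pair (σ (B.l m)) m) → Φ q = m := by
    intro m q hq
    obtain ⟨h1, h2⟩ := hpair (σ (B.l m)) m (by rw [hσ])
    rw [hΦ, hq]; exact h2
  refine ⟨⟨?_, ?_⟩, hl, hr, ?_, ?_, hinv⟩
  · -- injectivity
    intro p q hpq
    have hx : p.val.1 = q.val.1 := by rw [← hl p, ← hl q, hpq]
    have hs : H.src p.val.2 = H.src q.val.2 := by rw [← hr p, ← hr q, hpq]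
    set m := σ p.val.1 with hm
    set h := p.val.2 with hh
    set h' := q.val.2 with hh'
    have hrm : B.r m = H.tgt h := p.prop
    have hrm' : B.r m = H.tgt h' := by rw [hm, hx]; exact q.prop
    have hq2 : B.actR m h = B.actR m h' := by
      rw [← hΦ p, hpq, hΦ q, ← hx]
    have hc1 : H.src h = H.tgt (H.inv h') := by rw [H.tgt_inv, hs]
    have hc2 : H.src h' = H.tgt (H.inv h') := by rw [H.tgt_inv]
    have e1 : B.actR m (H.comp h (H.inv h')) = m := by
      rw [B.actR_comp m h (H.inv h') hrm hc1, hq2,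
        ← B.actR_comp m h' (H.inv h') hrm' hc2, H.comp_inv, ← hrm', B.actR_id]
    have e2 : B.r m = H.tgt (H.comp h (H.inv h')) := by
      rw [H.tgt_comp h (H.inv h') hc1]; exact hrm
    have e3 : H.comp h (H.inv h') = H.id (H.tgt h) := by
      rw [free m _ e2 e1, hrm]
    have e4 : h = h' := by
      have a1 : H.comp (H.comp h (H.inv h')) h' = h' := by
        rw [e3, hrm.symm.trans hrm']; exact H.id_comp h'
      rw [← a1, H.comp_assoc h (H.inv h') h' hc1 (H.src_inv h'), H.inv_comp,
        ← hs, H.comp_id]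
    exact Subtype.ext (Prod.ext hx e4)
  · -- surjectivity
    intro m
    exact ⟨⟨(B.l m, pair (σ (B.l m)) m), by
      show B.r (σ (B.l m)) = H.tgt (pair (σ (B.l m)) m)
      exact (hpair (σ (B.l m)) m (by rw [hσ])).1⟩, hinv m _ rfl⟩
  · -- right equivariance
    intro p q h' hsrc hq
    rw [hΦ q, hq]
    exact (B.actR_comp _ _ _ p.prop hsrc).trans (by rw [← hΦ])
  · -- left equivariance
    intro g p q hg hq
    obtain ⟨hk1, hk2⟩ := hpair (σ (G.tgt g)) (B.actL g (σ (G.src g)))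
      (by rw [hσ, B.l_actL g _ (by rw [hσ])])
    have hrk : B.r (B.actL g (σ (G.src g))) = B.r (σ (G.src g)) :=
      B.r_actL g _ (by rw [hσ])
    have hsk : H.src (pair (σ (G.tgt g)) (B.actL g (σ (G.src g)))) = H.tgt p.val.2 := by
      have h1 := B.r_actR _ _ hk1
      rw [hk2, hrk] at h1
      rw [← h1, hg]; exact p.prop
    rw [hΦ q, hq]
    show B.actR (σ (G.tgt g)) (H.comp _ p.val.2) = _
    rw [B.actR_comp _ _ _ hk1 hsk, hk2,
      B.actLR g _ _ (by rw [hσ]) (by rw [hg]; exact p.prop), hg, ← hΦ]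
end

section
/- Let G, H, K be set-theoretic groupoids, M a right principal G-H bibundle, and N a right principal H-K bibundle. Then the composition M ∘ N = (M ×_{H₀} N)/H, the quotient of {(m,n) : r_M(m) = l_N(n)} by the diagonal action (m,n)·h = (m·h, h⁻¹·n), is a right principal G-K bibundle with moment maps [m,n] ↦ l_M(m) and [m,n] ↦ r_N(n) and actions g·[m,n] = [g·m, n], [m,n]·k = [m, n·k]. -/
namespace SGroupoid

theorem inv_id'_s12 (G : SGroupoid) (x : G.Obj) : G.inv (G.id x) = G.id x := by
  have h2 : G.comp (G.id x) (G.inv (G.id x)) = G.inv (G.id x) := by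
    have := G.id_comp (G.inv (G.id x))
    rw [G.tgt_inv, G.src_id] at this
    exact this
  have h1 := G.comp_inv (G.id x)
  rw [h2, G.tgt_id] at h1
  exact h1

theorem inv_inv' (G : SGroupoid) (g : G.Arr) : G.inv (G.inv g) = g := by
  have h1 : G.inv (G.inv g) = G.comp (G.inv (G.inv g)) (G.id (G.src g)) := by
    have := G.comp_id (G.inv (G.inv g))
    rw [G.src_inv, G.tgt_inv] at this
    exact this.symm
  rw [← G.inv_comp g,
    ← G.comp_assoc _ _ _ (by rw [G.src_inv, G.tgt_inv]) (by rw [G.src_inv])] at h1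
  have h2 : G.comp (G.inv (G.inv g)) (G.inv g) = G.id (G.tgt g) := by
    have := G.inv_comp (G.inv g)
    rw [G.src_inv] at this
    exact this
  rw [h2, G.id_comp] at h1
  exact h1

theorem inv_comp'' (G : SGroupoid) (g h : G.Arr) (hc : G.src g = G.tgt h) :
    G.inv (G.comp g h) = G.comp (G.inv h) (G.inv g) := by
  have sgh : G.src (G.comp g h) = G.src h := G.src_comp g h hc
  have tgh : G.tgt (G.comp g h) = G.tgt g := G.tgt_comp g h hc
  have sih : G.src (G.inv h) = G.tgt (G.inv g) := by rw [G.src_inv, G.tgt_inv, hc]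
  have inner : G.comp (G.comp g h) (G.comp (G.inv h) (G.inv g)) = G.id (G.tgt g) := by
    have a1 : G.src (G.comp g h) = G.tgt (G.comp (G.inv h) (G.inv g)) := by
      rw [sgh, G.tgt_comp _ _ sih, G.tgt_inv]
    rw [G.comp_assoc g h (G.comp (G.inv h) (G.inv g)) hc
        (by rw [G.tgt_comp _ _ sih, G.tgt_inv]),
      ← G.comp_assoc h (G.inv h) (G.inv g) (by rw [G.tgt_inv])
        (by rw [G.src_inv, G.tgt_inv, hc]),
      G.comp_inv h]
    have : G.comp (G.id (G.tgt h)) (G.inv g) = G.inv g := by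
      have := G.id_comp (G.inv g)
      rw [G.tgt_inv, hc] at this
      exact this
    rw [this, G.comp_inv]
  have X1 : G.comp (G.inv (G.comp g h)) (G.comp (G.comp g h) (G.comp (G.inv h) (G.inv g)))
      = G.inv (G.comp g h) := by
    rw [inner]
    have := G.comp_id (G.inv (G.comp g h))
    rw [G.src_inv, tgh] at this
    exact this
  have X2 : G.comp (G.inv (G.comp g h)) (G.comp (G.comp g h) (G.comp (G.inv h) (G.inv g)))
      = G.comp (G.inv h) (G.inv g) := by
    rw [← G.comp_assoc _ _ _ (by rw [G.src_inv]) (by rw [sgh, G.tgt_comp _ _ sih, G.tgt_inv]),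
      G.inv_comp, sgh]
    have := G.id_comp (G.comp (G.inv h) (G.inv g))
    rw [G.tgt_comp _ _ sih, G.tgt_inv] at this
    exact this
  rw [← X1, X2]

end SGroupoid

/-- The composition `M ∘ N = (M ×_{H₀} N)/H` of right principal bibundles is
right principal: the induced left moment map `[m,n] ↦ l m` is surjective, the
induced right `K`-action `[m,n]·k = [m, n·k]` is free, and it is transitive
on left fibers. -/
theorem stmt12 (G H K : SGroupoid) (B : Bibundle G H) (N : Bibundle H K)
    (Blsurj : Function.Surjective B.l)
    (Bfree : ∀ m h, B.r m = H.tgt h → B.actR m h = m → h = H.id (B.r m))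
    (Btrans : ∀ m m', B.l m = B.l m' → ∃ h, B.r m = H.tgt h ∧ B.actR m h = m')
    (Nlsurj : Function.Surjective N.l)
    (Nfree : ∀ n k, N.r n = K.tgt k → N.actR n k = n → k = K.id (N.r n))
    (Ntrans : ∀ n n', N.l n = N.l n' → ∃ k, N.r n = K.tgt k ∧ N.actR n k = n')
    -- `rel` is the diagonal `H`-orbit relation on `M ×_{H₀} N`
    (rel : {p : B.M × N.M // B.r p.1 = N.l p.2} →
           {p : B.M × N.M // B.r p.1 = N.l p.2} → Prop)
    (hrel : ∀ p q, rel p q ↔ ∃ h, N.l p.val.2 = H.tgt h ∧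
      q.val = (B.actR p.val.1 h, N.actL (H.inv h) p.val.2)) :
    -- (P1): the left moment map `[m,n] ↦ l m` is surjective
    (∀ x : G.Obj, ∃ p : {p : B.M × N.M // B.r p.1 = N.l p.2},
      B.l p.val.1 = x) ∧
    -- (P2): the right `K`-action on the quotient is free
    (∀ (p q : {p : B.M × N.M // B.r p.1 = N.l p.2}) (k : K.Arr),
      N.r p.val.2 = K.tgt k → q.val = (p.val.1, N.actR p.val.2 k) →
      Quot.mk rel q = Quot.mk rel p → k = K.id (N.r p.val.2)) ∧
    -- (P3): the right `K`-action on the quotient is transitive on left fibers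
    (∀ p p' : {p : B.M × N.M // B.r p.1 = N.l p.2},
      B.l p.val.1 = B.l p'.val.1 →
      ∃ k, ∃ q : {p : B.M × N.M // B.r p.1 = N.l p.2},
        N.r p.val.2 = K.tgt k ∧ q.val = (p.val.1, N.actR p.val.2 k) ∧
        Quot.mk rel q = Quot.mk rel p') := by
  -- rel is an equivalence relation
  have hrefl : ∀ a, rel a a := by
    intro a
    rw [hrel]
    refine ⟨H.id (N.l a.val.2), (H.tgt_id _).symm, ?_⟩
    have h1 : B.actR a.val.1 (H.id (N.l a.val.2)) = a.val.1 := by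
      rw [← a.prop, B.actR_id]
    have h2 : N.actL (H.inv (H.id (N.l a.val.2))) a.val.2 = a.val.2 := by
      rw [H.inv_id'_s12, N.actL_id]
    rw [h1, h2]
  have hsymm : ∀ a b, rel a b → rel b a := by
    intro a b hab
    rw [hrel] at hab ⊢
    obtain ⟨h, h1, h2⟩ := hab
    have hb1 : b.val.1 = B.actR a.val.1 h := by rw [h2]
    have hb2 : b.val.2 = N.actL (H.inv h) a.val.2 := by rw [h2]
    have hra : B.r a.val.1 = H.tgt h := by rw [a.prop, h1]
    refine ⟨H.inv h, ?_, ?_⟩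
    · rw [hb2, N.l_actL _ _ (by rw [H.src_inv, h1])]
    · have e1 : B.actR b.val.1 (H.inv h) = a.val.1 := by
        rw [hb1, ← B.actR_comp _ _ _ hra (H.tgt_inv h).symm, H.comp_inv, ← hra, B.actR_id]
      have e2 : N.actL (H.inv (H.inv h)) b.val.2 = a.val.2 := by
        rw [H.inv_inv', hb2, ← N.actL_comp _ _ _ (H.tgt_inv h).symm
          (by rw [H.src_inv, h1]), H.comp_inv, ← h1, N.actL_id]
      rw [e1, e2]
  have htrans : ∀ a b c, rel a b → rel b c → rel a c := by
    intro a b c hab hbc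
    rw [hrel] at hab hbc ⊢
    obtain ⟨h, h1, h2⟩ := hab
    obtain ⟨h', h1', h2'⟩ := hbc
    have hb2 : b.val.2 = N.actL (H.inv h) a.val.2 := by rw [h2]
    have hsh : H.src h = H.tgt h' := by
      rw [← h1', hb2, N.l_actL _ _ (by rw [H.src_inv, h1]), H.tgt_inv]
    have hra : B.r a.val.1 = H.tgt h := by rw [a.prop, h1]
    refine ⟨H.comp h h', by rw [h1, H.tgt_comp _ _ hsh], ?_⟩
    have hb1 : b.val.2 = N.actL (H.inv h) a.val.2 := hb2
    have hb1' : b.val.1 = B.actR a.val.1 h := by rw [h2]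
    have e1 : B.actR a.val.1 (H.comp h h') = c.val.1 := by
      rw [B.actR_comp _ _ _ hra hsh, ← hb1', h2']
    have e2 : N.actL (H.inv (H.comp h h')) a.val.2 = c.val.2 := by
      rw [H.inv_comp'' _ _ hsh,
        N.actL_comp _ _ _ (by rw [H.src_inv, H.tgt_inv, hsh]) (by rw [H.src_inv, h1]),
        ← hb2, h2']
    rw [e1, e2]
  refine ⟨?_, ?_, ?_⟩
  · intro x
    obtain ⟨m, hm⟩ := Blsurj x
    obtain ⟨n, hn⟩ := Nlsurj (B.r m)
    exact ⟨⟨(m, n), hn.symm⟩, hm⟩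
  · have key : ∀ a b, Relation.EqvGen rel a b → rel a b := by
      intro a b hab
      induction hab with
      | rel a b hab => exact hab
      | refl a => exact hrefl a
      | symm a b _ ih => exact hsymm _ _ ih
      | trans a b c _ _ ih1 ih2 => exact htrans _ _ _ ih1 ih2
    intro p q k hk hq hquot
    have hqp : rel q p := key _ _ (Quot.eq.mp hquot)
    rw [hrel] at hqp
    obtain ⟨h, h1, h2⟩ := hqp
    have hq1 : q.val.1 = p.val.1 := by rw [hq]
    have hq2 : q.val.2 = N.actR p.val.2 k := by rw [hq]
    have hlq2 : N.l q.val.2 = N.l p.val.2 := by rw [hq2, N.l_actR _ _ hk]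
    have hrp : B.r p.val.1 = H.tgt h := by rw [p.prop, ← hlq2, h1]
    have hid : h = H.id (B.r p.val.1) := by
      apply Bfree _ _ hrp
      have h4 : p.val.1 = B.actR q.val.1 h := congrArg Prod.fst h2
      rw [hq1] at h4
      exact h4.symm
    have hp2 : N.actR p.val.2 k = p.val.2 := by
      have h5 : p.val.2 = N.actL (H.inv h) q.val.2 := congrArg Prod.snd h2
      rw [hq2, hid, H.inv_id'_s12] at h5
      rw [p.prop, ← N.l_actR _ _ hk, N.actL_id] at h5
      exact h5.symm
    exact Nfree _ _ hk hp2
  · intro p p' hl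
    obtain ⟨h, hh1, hh2⟩ := Btrans p.val.1 p'.val.1 hl
    have hsrc : H.src h = N.l p'.val.2 := by
      rw [← p'.prop, ← hh2, B.r_actR _ _ hh1]
    have hln2 : N.l (N.actL h p'.val.2) = H.tgt h := N.l_actL _ _ hsrc
    obtain ⟨k, hk1, hk2⟩ := Ntrans p.val.2 (N.actL h p'.val.2)
      (by rw [hln2, ← hh1, ← p.prop])
    refine ⟨k, ⟨(p.val.1, N.actR p.val.2 k), by rw [N.l_actR _ _ hk1, ← p.prop]⟩,
      hk1, rfl, ?_⟩
    refine (Quot.sound ?_).symm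
    rw [hrel]
    refine ⟨H.inv h, by rw [H.tgt_inv, hsrc], ?_⟩
    have e1 : B.actR p'.val.1 (H.inv h) = p.val.1 := by
      rw [← hh2, ← B.actR_comp _ _ _ hh1 (H.tgt_inv h).symm, H.comp_inv, ← hh1, B.actR_id]
    have e2 : N.actL (H.inv (H.inv h)) p'.val.2 = N.actR p.val.2 k := by
      rw [H.inv_inv', hk2]
    simp only [e1, e2]
end

section
/- Let G, H be groupoids and M a G-H bibundle that is a Morita equivalence (there is an H-G bibundle N with M ∘ N ≅ Id_G and N ∘ M ≅ Id_H). Then the right H-action on M is free: m·h = m implies h = 1_{r_M(m)}. -/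
/-- The pull-back `M ×_{H₀} N` underlying the composition of bibundles. -/
def CompC (G H K : SGroupoid) (B : Bibundle G H) (C : Bibundle H K) : Type :=
  {p : B.M × C.M // B.r p.1 = C.l p.2}

/-- The diagonal `H`-orbit relation on `M ×_{H₀} N`; the composition
`M ∘ N` is the quotient `Quot (BibCompRel G H K B C)`. -/
def BibCompRel (G H K : SGroupoid) (B : Bibundle G H) (C : Bibundle H K) :
    CompC G H K B C → CompC G H K B C → Prop :=
  fun p q => ∃ h, B.r p.val.1 = H.tgt h ∧
    q.val = (B.actR p.val.1 h, C.actL (H.inv h) p.val.2)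

/-- `CompIsoId G H B C` says that the composed `G`-`G` bibundle `B ∘ C` is
isomorphic, as a bibundle, to `Id_G` (the groupoid `G` acting on itself by
left and right multiplication, with moment maps `tgt` and `src`): there is a
biequivariant bijection preserving both moment maps. -/
def CompIsoId (G H : SGroupoid) (B : Bibundle G H) (C : Bibundle H G) : Prop :=
  ∃ Φ : Quot (BibCompRel G H G B C) → G.Arr,
    Function.Bijective Φ ∧
    (∀ p, G.tgt (Φ (Quot.mk (BibCompRel G H G B C) p)) = B.l p.val.1) ∧
    (∀ p, G.src (Φ (Quot.mk (BibCompRel G H G B C) p)) = C.r p.val.2) ∧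
    (∀ (g : G.Arr) (p q : CompC G H G B C), G.src g = B.l p.val.1 →
      q.val = (B.actL g p.val.1, p.val.2) →
      Φ (Quot.mk (BibCompRel G H G B C) q) =
        G.comp g (Φ (Quot.mk (BibCompRel G H G B C) p))) ∧
    (∀ (p q : CompC G H G B C) (g' : G.Arr), C.r p.val.2 = G.tgt g' →
      q.val = (p.val.1, C.actR p.val.2 g') →
      Φ (Quot.mk (BibCompRel G H G B C) q) =
        G.comp (Φ (Quot.mk (BibCompRel G H G B C) p)) g')

/-- `M` is a Morita equivalence if there is an `H`-`G` bibundle `N` with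
bibundle isomorphisms `M ∘ N ≅ Id_G` and `N ∘ M ≅ Id_H`. -/
def Morita (G H : SGroupoid) (B : Bibundle G H) : Prop :=
  ∃ C : Bibundle H G, CompIsoId G H B C ∧ CompIsoId H G C B

/-- If a `G`-`H` bibundle is a Morita equivalence then its right `H`-action
is free. -/
theorem stmt15 (G H : SGroupoid) (B : Bibundle G H) (hM : Morita G H B) :
    ∀ m h, B.r m = H.tgt h → B.actR m h = m → h = H.id (B.r m) := by
  intro m h hmh hact
  obtain ⟨C, ⟨Φ, Φbij, Φtgt, Φsrc, ΦL, ΦR⟩, ⟨Ψ, Ψbij, Ψtgt, Ψsrc, ΨL, ΨR⟩⟩ := hM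
  -- find n with C.r n = B.l m, using surjectivity of Φ
  obtain ⟨q0, hq0⟩ := Φbij.2 (G.id (B.l m))
  obtain ⟨p0, rfl⟩ := Quot.exists_rep q0
  have hrn : C.r p0.val.2 = B.l m := by
    have := Φsrc p0
    rw [hq0, G.src_id] at this
    exact this.symm
  -- form the pair (n, m) in the composition C ∘ B
  set p : CompC H G H C B := ⟨(p0.val.2, m), hrn⟩ with hp
  have hB : B.r p.val.2 = H.tgt h := hmh
  have key : Ψ (Quot.mk (BibCompRel H G H C B) p) =
      H.comp (Ψ (Quot.mk (BibCompRel H G H C B) p)) h := by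
    refine ΨR p p h hB ?_
    show p.val = (p.val.1, B.actR p.val.2 h)
    simp [hp, hact]
  set ψ := Ψ (Quot.mk (BibCompRel H G H C B) p) with hψ
  have hsrc : H.src ψ = H.tgt h := by
    have := Ψsrc p
    rw [← hψ] at this
    exact this.trans hmh
  -- multiply key by inv ψ on the left
  have h1 : H.comp (H.inv ψ) ψ = H.comp (H.inv ψ) (H.comp ψ h) := by
    rw [← key]
  rw [← H.comp_assoc (H.inv ψ) ψ h (H.src_inv ψ) hsrc, H.inv_comp,
    hsrc] at h1
  rw [H.id_comp h] at h1
  rw [← hmh] at h1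
  exact h1.symm
end
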